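/- arXiv:1511.06534 — 4 statements merged into one kernel-verified Lean document; each statement's English description precedes it below -/
import Mathlib

section
/- Let q be a positive definite real quadratic form on ℝ^n such that q(x) ≥ 1 for all nonzero integral vectors x ∈ ℤ^n, and let q_A(y) = Σ_{i=1}^m y_i^2 − Σ_{i=1}^{m-1} y_i y_{i+1} be the quadratic form of the Dynkin diagram A_m. Then the tensor product form q ⊗ q_A on ℝ^{nm} satisfies (q ⊗ q_A)(x) ≥ 1 for every nonzero integral vector x ∈ ℤ^{nm}. -/
open Matrix Kronecker

/-!
The Gram matrix of `q_A` is `½ DᵀD`, where `D` takes `(y₀, …, y_m)` to its successive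
differences `(y₀, y₁ - y₀, …, y_m - y_{m-1}, -y_m)`. Hence `(q ⊗ q_A)(x) = ½ Σ_k q(w_k)`,
where the `w_k ∈ ℤⁿ` are the successive differences of the columns of `x`. These sum to zero
and are not all zero, so at least two of them are nonzero and contribute at least `1` each.
-/

/-- `(paddedDiff R m *ᵥ y) k = y k - y (k - 1)`, where `y` is extended by zero at both ends. -/
def paddedDiff (R : Type*) [Ring R] (m : ℕ) : Matrix (Fin (m + 2)) (Fin (m + 1)) R :=
  of fun k i => (if k = i.castSucc then 1 else 0) - (if k = i.succ then 1 else 0)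

section paddedDiff

variable (R : Type*) [Ring R] (m : ℕ)

theorem paddedDiff_transpose_mul_self :
    (paddedDiff R m)ᵀ * paddedDiff R m = of fun i j : Fin (m + 1) => if i = j then 2 else
      if (i : ℕ) + 1 = (j : ℕ) ∨ (j : ℕ) + 1 = (i : ℕ) then -1 else 0 := by
  ext i j
  simp only [paddedDiff, mul_apply, transpose_apply, of_apply, sub_mul, ite_mul, one_mul,
    zero_mul, Finset.sum_sub_distrib, Finset.sum_ite_eq', Finset.mem_univ, if_true]
  simp only [Fin.ext_iff, Fin.val_castSucc, Fin.val_succ]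
  split_ifs <;> first | omega | norm_num

theorem partialSum_mul_paddedDiff :
    (of fun (i : Fin (m + 1)) (k : Fin (m + 2)) => if k ≤ i.castSucc then (1 : R) else 0) *
      paddedDiff R m = 1 := by
  ext i j
  simp only [paddedDiff, mul_apply, of_apply, mul_sub, mul_ite, mul_one, mul_zero,
    Finset.sum_sub_distrib, Finset.sum_ite_eq', Finset.mem_univ, if_true, one_apply]
  simp only [Fin.le_iff_val_le_val, Fin.ext_iff, Fin.val_castSucc, Fin.val_succ]
  split_ifs <;> first | omega | norm_num

theorem paddedDiff_mulVec_injective : Function.Injective (paddedDiff R m *ᵥ ·) := by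
  intro u v huv
  simpa [mulVec_mulVec, partialSum_mul_paddedDiff] using
    congrArg ((of fun (i : Fin (m + 1)) (k : Fin (m + 2)) =>
      if k ≤ i.castSucc then (1 : R) else 0) *ᵥ ·) huv

theorem sum_paddedDiff_mulVec (v : Fin (m + 1) → R) : ∑ k, (paddedDiff R m *ᵥ v) k = 0 := by
  simp only [paddedDiff, mulVec, dotProduct, of_apply, sub_mul, ite_mul, one_mul, zero_mul,
    Finset.sum_sub_distrib]
  rw [Finset.sum_comm, Finset.sum_comm (γ := Fin (m + 2))]
  simp only [Finset.sum_ite_eq', Finset.mem_univ, if_true, sub_self]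

theorem paddedDiff_map {S : Type*} [Ring S] (f : R →+* S) :
    (paddedDiff R m).map f = paddedDiff S m := by
  ext k i
  simp only [paddedDiff, map_apply, of_apply, map_sub, apply_ite f, map_one, map_zero]

end paddedDiff

section kronecker

variable {α ι κ ν : Type*} [CommSemiring α] [Fintype ι] [Fintype ν]

theorem dotProduct_kronecker_transpose_mul_self_mulVec [Fintype κ] [DecidableEq ν]
    [DecidableEq κ] (Z : Matrix ν ν α) (D : Matrix κ ι α) (x : ν × ι → α) :
    x ⬝ᵥ (Z ⊗ₖ (Dᵀ * D)) *ᵥ x =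
      ((1 : Matrix ν ν α) ⊗ₖ D *ᵥ x) ⬝ᵥ
        (Z ⊗ₖ (1 : Matrix κ κ α)) *ᵥ ((1 : Matrix ν ν α) ⊗ₖ D *ᵥ x) := by
  have hfactor : Z ⊗ₖ (Dᵀ * D) =
      ((1 : Matrix ν ν α) ⊗ₖ D)ᵀ * (Z ⊗ₖ (1 : Matrix κ κ α)) * ((1 : Matrix ν ν α) ⊗ₖ D) := by
    rw [← kroneckerMap_transpose, transpose_one, ← mul_kronecker_mul, ← mul_kronecker_mul,
      Matrix.one_mul, Matrix.mul_one, Matrix.mul_one]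
  rw [hfactor, ← mulVec_mulVec, ← mulVec_mulVec, dotProduct_mulVec, vecMul_transpose]

theorem dotProduct_kronecker_one_mulVec [Fintype κ] [DecidableEq κ] (Z : Matrix ν ν α)
    (y : ν × κ → α) :
    y ⬝ᵥ (Z ⊗ₖ (1 : Matrix κ κ α)) *ᵥ y =
      ∑ k, (fun a => y (a, k)) ⬝ᵥ Z *ᵥ fun a => y (a, k) := by
  simp only [dotProduct, mulVec, kroneckerMap_apply, one_apply, mul_ite, mul_one, mul_zero,
    Fintype.sum_prod_type, Finset.mul_sum]
  rw [Finset.sum_comm]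
  simp only [ite_mul, zero_mul, mul_ite, mul_zero, Finset.sum_ite_eq, Finset.mem_univ, if_true]

theorem one_kronecker_mulVec_apply [DecidableEq ν] (D : Matrix κ ι α) (x : ν × ι → α)
    (a : ν) (k : κ) :
    ((1 : Matrix ν ν α) ⊗ₖ D *ᵥ x) (a, k) = (D *ᵥ fun i => x (a, i)) k := by
  simp [dotProduct, mulVec, one_apply, ite_mul, Fintype.sum_prod_type]

end kronecker

theorem exists_ne_of_sum_eq_zero {ι G : Type*} [Fintype ι] [AddCommMonoid G] {w : ι → G}
    (hsum : ∑ k, w k = 0) (hw : w ≠ 0) : ∃ k l, k ≠ l ∧ w k ≠ 0 ∧ w l ≠ 0 := by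
  obtain ⟨k, hk⟩ : ∃ k, w k ≠ 0 := Function.ne_iff.mp hw
  by_contra! hrest
  refine hk ?_
  rw [← hsum, Finset.sum_eq_single k (fun l _ hlk => ?_) (by simp)]
  exact hrest k l (Ne.symm hlk) hk

theorem two_le_sum_of_sum_eq_zero {ι G : Type*} [Fintype ι] [AddCommMonoid G] (q : G → ℝ)
    (hq0 : q 0 = 0) (hq : ∀ g ≠ 0, 1 ≤ q g) {w : ι → G} (hsum : ∑ k, w k = 0) (hw : w ≠ 0) :
    2 ≤ ∑ k, q (w k) := by
  classical
  obtain ⟨k, l, hkl, hk, hl⟩ := exists_ne_of_sum_eq_zero hsum hw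
  have hq_nonneg : ∀ g, 0 ≤ q g := fun g => by
    rcases eq_or_ne g 0 with rfl | hg
    · exact hq0.ge
    · linarith [hq g hg]
  calc 2 ≤ q (w k) + q (w l) := by linarith [hq _ hk, hq _ hl]
    _ = ∑ j ∈ {k, l}, q (w j) := by rw [Finset.sum_pair hkl]
    _ ≤ ∑ j, q (w j) :=
      Finset.sum_le_sum_of_subset_of_nonneg (Finset.subset_univ _) fun j _ _ => hq_nonneg _

theorem tensor_with_dynkin_min_one_general (n m : ℕ)
    (Z : Matrix (Fin n) (Fin n) ℝ)
    (hmin : ∀ x : Fin n → ℤ, x ≠ 0 →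
      1 ≤ (fun j => (x j : ℝ)) ⬝ᵥ Z.mulVec (fun j => (x j : ℝ)))
    (A : Matrix (Fin (m + 1)) (Fin (m + 1)) ℝ)
    (hA : A = Matrix.of fun (i j : Fin (m + 1)) => if i = j then 1 else
      if (i : ℕ) + 1 = (j : ℕ) ∨ (j : ℕ) + 1 = (i : ℕ) then -(1 / 2) else 0)
    (x : Fin n × Fin (m + 1) → ℤ) (hx : x ≠ 0) :
    1 ≤ (fun p => (x p : ℝ)) ⬝ᵥ (Z ⊗ₖ A).mulVec (fun p => (x p : ℝ)) := by
  set w : Fin (m + 2) → Fin n → ℤ := fun k a => (paddedDiff ℤ m *ᵥ fun i => x (a, i)) k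
  have hA_half : A = (1 / 2 : ℝ) • ((paddedDiff ℝ m)ᵀ * paddedDiff ℝ m) := by
    rw [hA, paddedDiff_transpose_mul_self]
    ext i j
    simp only [of_apply, Matrix.smul_apply, smul_eq_mul]
    split_ifs <;> norm_num
  have hcols : ∀ k, (fun a => ((1 : Matrix (Fin n) (Fin n) ℝ) ⊗ₖ paddedDiff ℝ m *ᵥ
      fun p => (x p : ℝ)) (a, k)) = fun a => (w k a : ℝ) := by
    intro k
    funext a
    rw [one_kronecker_mulVec_apply, ← paddedDiff_map ℤ m (Int.castRingHom ℝ)]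
    exact (RingHom.map_mulVec (Int.castRingHom ℝ) (paddedDiff ℤ m) _ k).symm
  have hsum : ∑ k, w k = 0 := by
    funext a
    simp only [w, Finset.sum_apply, sum_paddedDiff_mulVec, Pi.zero_apply]
  have hw : w ≠ 0 := by
    contrapose! hx
    funext ⟨a, i⟩
    have hrow : paddedDiff ℤ m *ᵥ (fun i => x (a, i)) = paddedDiff ℤ m *ᵥ 0 := by
      funext k
      simpa [w] using congrFun (congrFun hx k) a
    exact congrFun (paddedDiff_mulVec_injective ℤ m hrow) i
  have htwo := two_le_sum_of_sum_eq_zero _ (by simp) hmin hsum hw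
  rw [hA_half, kronecker_smul, smul_mulVec, dotProduct_smul,
    dotProduct_kronecker_transpose_mul_self_mulVec, dotProduct_kronecker_one_mulVec]
  simp only [hcols, smul_eq_mul]
  linarith

/-- If `q` is a positive definite quadratic form (Gram matrix `Z`) with `q(x) ≥ 1` for
every nonzero integral vector, and `q_A` is the `A_{m+1}` Dynkin form (Gram matrix `A`),
then the tensor product form `q ⊗ q_A` also satisfies `(q ⊗ q_A)(x) ≥ 1` for every
nonzero integral vector `x`. -/
theorem tensor_with_dynkin_min_one (n m : ℕ)
    (Z : Matrix (Fin n) (Fin n) ℝ) (hsym : Z.IsSymm) (hpd : Z.PosDef)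
    (hmin : ∀ x : Fin n → ℤ, x ≠ 0 →
      1 ≤ (fun j => (x j : ℝ)) ⬝ᵥ Z.mulVec (fun j => (x j : ℝ)))
    (A : Matrix (Fin (m + 1)) (Fin (m + 1)) ℝ)
    (hA : A = Matrix.of fun (i j : Fin (m + 1)) => if i = j then 1 else
      if (i : ℕ) + 1 = (j : ℕ) ∨ (j : ℕ) + 1 = (i : ℕ) then -(1 / 2) else 0)
    (x : Fin n × Fin (m + 1) → ℤ) (hx : x ≠ 0) :
    1 ≤ (fun p => (x p : ℝ)) ⬝ᵥ (Z ⊗ₖ A).mulVec (fun p => (x p : ℝ)) :=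
  tensor_with_dynkin_min_one_general n m Z hmin A hA x hx
end

section
/- Let M = C ⊗ T be a Kronecker product of symmetric positive semidefinite integer matrices, where C is l×l and T is t×t. Suppose Q ∈ ℤ^{k×(lt)} has no zero rows and Q^T Q = M. If q is a positive definite integral quadratic form of rank l with Gram matrix Z_1 and q_A the A_t Dynkin form with Gram matrix Z_2, then k ≤ Σ_{r,s} (Z_1 ⊗ Z_2)_{rs} M_{rs}, i.e., k is at most the trace pairing of the tensor Gram matrix with M. -/
/-!
Let `D` be the `(t+1) × t` matrix whose column `n` is the simple root `e n - e (n+1)` of `A_t`,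
so that `Dᵀ D` is the Cartan matrix `2 Z₂`. Writing a vector of `ℤ^(l t)` as `vec X`, this gives
`(q ⊗ q_A)(vec X) = ½ ∑ₑ q((D X)ₑ)`. The rows of `D X` are integral, sum to zero, and are not all
zero when `X ≠ 0`, so at least two of them are nonzero and each contributes `q ≥ 1`. Hence
`q ⊗ q_A ≥ 1` on nonzero integral vectors, and summing over the rows of `Q` gives the bound.
-/

open Matrix Kronecker

namespace Matrix

variable {n m p R : Type*}

theorem dotProduct_transpose_mul_mul_mulVec [Fintype n] [Fintype m] [CommSemiring R]
    (A : Matrix m m R) (B : Matrix m n R) (x : n → R) :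
    x ⬝ᵥ (Bᵀ * A * B) *ᵥ x = (B *ᵥ x) ⬝ᵥ A *ᵥ (B *ᵥ x) := by
  rw [← mulVec_mulVec, ← mulVec_mulVec, dotProduct_mulVec, vecMul_transpose]

theorem kronecker_transpose_mul_self [Fintype n] [Fintype p] [CommSemiring R] [DecidableEq n]
    [DecidableEq p]
    (Z : Matrix n n R) (D : Matrix p m R) :
    Z ⊗ₖ (Dᵀ * D) =
      ((1 : Matrix n n R) ⊗ₖ D)ᵀ * (Z ⊗ₖ (1 : Matrix p p R)) * ((1 : Matrix n n R) ⊗ₖ D) := by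
  rw [← kroneckerMap_transpose, ← mul_kronecker_mul, ← mul_kronecker_mul]
  simp

theorem vec_dotProduct_kronecker_one_mulVec_vec [Fintype n] [Fintype p] [CommSemiring R]
    [DecidableEq p] (Z : Matrix n n R) (Y : Matrix p n R) :
    vec Y ⬝ᵥ (Z ⊗ₖ 1) *ᵥ vec Y = ∑ e, Y e ⬝ᵥ Z *ᵥ Y e := by
  rw [kronecker_mulVec_vec, Matrix.one_mul]
  simp only [dotProduct, vec, mul_apply, transpose_apply, mul_comm, Finset.mul_sum,
    Fintype.sum_prod_type, mulVec]
  rw [Finset.sum_comm]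

theorem vec_dotProduct_kronecker_transpose_mul_self_mulVec_vec [Fintype n] [Fintype m]
    [Fintype p] [CommSemiring R] [DecidableEq n] [DecidableEq p]
    (Z : Matrix n n R) (D : Matrix p m R) (X : Matrix m n R) :
    vec X ⬝ᵥ (Z ⊗ₖ (Dᵀ * D)) *ᵥ vec X = ∑ e, (D * X) e ⬝ᵥ Z *ᵥ (D * X) e := by
  rw [kronecker_transpose_mul_self, dotProduct_transpose_mul_mul_mulVec, ← vec_mul_eq_mulVec,
    vec_dotProduct_kronecker_one_mulVec_vec]

theorem sum_mul_transpose_mul_self_apply [Fintype n] [Fintype m] [CommSemiring R]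
    (Z : Matrix n n R) (A : Matrix m n R) :
    ∑ r, ∑ s, Z r s * (Aᵀ * A) r s = ∑ i, A i ⬝ᵥ Z *ᵥ A i := by
  simp only [mul_apply, transpose_apply, dotProduct, mulVec, Finset.mul_sum]
  conv_rhs => rw [Finset.sum_comm]
  refine Finset.sum_congr rfl fun r _ => ?_
  rw [Finset.sum_comm]
  refine Finset.sum_congr rfl fun s _ => Finset.sum_congr rfl fun i _ => ?_
  ring

theorem exists_intCast_dotProduct_mulVec [Fintype n] [LinearOrder n] {Z : Matrix n n ℝ}
    (hZ : Z.IsSymm) (hdiag : ∀ i, ∃ z : ℤ, Z i i = z) (hoff : ∀ i j, ∃ z : ℤ, 2 * Z i j = z)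
    (v : n → ℤ) : ∃ z : ℤ, (Int.cast ∘ v) ⬝ᵥ Z *ᵥ (Int.cast ∘ v) = (z : ℝ) := by
  choose d hd using hdiag
  choose o ho using hoff
  -- `Z = (U + Uᵀ) / 2` for the integral upper-triangular `U`, and `v ⬝ᵥ Uᵀ *ᵥ v = v ⬝ᵥ U *ᵥ v`
  let U : Matrix n n ℤ := of fun i j => if i < j then o i j else if i = j then d i else 0
  have hU : (2 : ℝ) • Z = U.map Int.cast + (U.map Int.cast)ᵀ := by
    ext i j
    rcases lt_trichotomy i j with h | rfl | h
    · simp [U, h, h.not_gt, h.ne', ho]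
    · simp [U, hd]; ring
    · simp [U, h, h.not_gt, h.ne', ← ho, hZ.apply i j]
  have hUt : (Int.cast ∘ v) ⬝ᵥ (U.map Int.cast)ᵀ *ᵥ (Int.cast ∘ v)
      = (Int.cast ∘ v) ⬝ᵥ U.map Int.cast *ᵥ (Int.cast ∘ v : n → ℝ) := by
    rw [dotProduct_mulVec, vecMul_transpose, dotProduct_comm]
  have hUcast : ((v ⬝ᵥ U *ᵥ v : ℤ) : ℝ) = (Int.cast ∘ v) ⬝ᵥ U.map Int.cast *ᵥ (Int.cast ∘ v) := by
    rw [← eq_intCast (Int.castRingHom ℝ), RingHom.map_dotProduct]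
    congr 1
    ext i
    exact RingHom.map_mulVec _ _ _ i
  have hquad := congrArg (fun M => (Int.cast ∘ v) ⬝ᵥ M *ᵥ (Int.cast ∘ v : n → ℝ)) hU
  simp only [smul_mulVec, dotProduct_smul, add_mulVec, dotProduct_add, hUt, smul_eq_mul] at hquad
  exact ⟨v ⬝ᵥ U *ᵥ v, by rw [hUcast]; linarith⟩

theorem PosDef.one_le_dotProduct_mulVec_intCast [Fintype n] [LinearOrder n] {Z : Matrix n n ℝ}
    (hZ : Z.PosDef) (hdiag : ∀ i, ∃ z : ℤ, Z i i = z) (hoff : ∀ i j, ∃ z : ℤ, 2 * Z i j = z)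
    {v : n → ℤ} (hv : v ≠ 0) : 1 ≤ (Int.cast ∘ v) ⬝ᵥ Z *ᵥ (Int.cast ∘ v : n → ℝ) := by
  have hsymm : Z.IsSymm := by
    rw [IsSymm, ← conjTranspose_eq_transpose_of_trivial]
    exact hZ.isHermitian
  obtain ⟨z, hz⟩ := exists_intCast_dotProduct_mulVec hsymm hdiag hoff v
  have hpos := hZ.dotProduct_mulVec_pos (x := (Int.cast ∘ v : n → ℝ))
    (fun h => hv (funext fun i => by simpa using congrFun h i))
  rw [star_trivial, hz] at hpos
  rw [hz]
  exact_mod_cast hpos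

end Matrix

theorem Finset.exists_ne_ne_zero_of_sum_eq_zero {ι M : Type*} [AddCommMonoid M] {s : Finset ι}
    {f : ι → M} (hsum : ∑ i ∈ s, f i = 0) {a : ι} (ha : a ∈ s) (hfa : f a ≠ 0) :
    ∃ b ∈ s, b ≠ a ∧ f b ≠ 0 := by
  by_contra! h
  exact hfa (by rwa [Finset.sum_eq_single_of_mem a ha h] at hsum)

def pathIncidence (t : ℕ) : Matrix (Fin (t + 1)) (Fin t) ℤ :=
  of fun e n => (if e = n.castSucc then 1 else 0) - if e = n.succ then 1 else 0

theorem pathIncidence_transpose_mul_self (t : ℕ) :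
    (pathIncidence t)ᵀ * pathIncidence t = CartanMatrix.A t := by
  ext n n'
  simp only [pathIncidence, CartanMatrix.A, mul_apply, transpose_apply, of_apply, sub_mul, mul_sub,
    ite_mul, one_mul, zero_mul, Finset.sum_sub_distrib, Finset.sum_ite_eq', Finset.mem_univ,
    if_true]
  simp only [Fin.ext_iff, Fin.val_castSucc, Fin.val_succ]
  split_ifs <;> omega

theorem one_vecMul_pathIncidence (t : ℕ) : 1 ᵥ* pathIncidence t = 0 := by
  ext n
  simp [pathIncidence, vecMul, dotProduct]

theorem pathIncidence_mul_eq_zero_iff {t : ℕ} {n : Type*} {X : Matrix (Fin t) n ℤ} :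
    pathIncidence t * X = 0 ↔ X = 0 := by
  refine ⟨fun h => ?_, fun h => by rw [h, Matrix.mul_zero]⟩
  -- partial sums invert the differences
  let L : Matrix (Fin t) (Fin (t + 1)) ℤ := of fun n e => if e ≤ n.castSucc then 1 else 0
  have hL : L * pathIncidence t = 1 := by
    ext n n'
    simp only [L, pathIncidence, mul_apply, of_apply, mul_sub, mul_ite, mul_one, mul_zero,
      Finset.sum_sub_distrib, Finset.sum_ite_eq', Finset.mem_univ, if_true, one_apply,
      Fin.castSucc_le_castSucc_iff, Fin.succ_le_castSucc_iff]
    split_ifs <;> omega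
  rw [← Matrix.one_mul X, ← hL, Matrix.mul_assoc, h, Matrix.mul_zero]

theorem one_le_vec_dotProduct_kronecker_cartanMatrixA_mulVec_vec {n : Type*} [Fintype n]
    [DecidableEq n] {Z : Matrix n n ℝ}
    (hZ : ∀ v : n → ℤ, v ≠ 0 → 1 ≤ (Int.cast ∘ v) ⬝ᵥ Z *ᵥ (Int.cast ∘ v : n → ℝ))
    {t : ℕ} {X : Matrix (Fin t) n ℤ} (hX : X ≠ 0) :
    1 ≤ vec (X.map Int.cast) ⬝ᵥ (Z ⊗ₖ ((2⁻¹ : ℝ) • (CartanMatrix.A t).map Int.cast)) *ᵥ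
      vec (X.map Int.cast) := by
  set Y := pathIncidence t * X with hY
  have hq_nonneg : ∀ e, 0 ≤ (Int.cast ∘ Y e) ⬝ᵥ Z *ᵥ (Int.cast ∘ Y e : n → ℝ) := by
    intro e
    rcases eq_or_ne (Y e) 0 with h | h
    · simp [h]
    · exact zero_le_one.trans (hZ _ h)
  obtain ⟨e, he⟩ : ∃ e, Y e ≠ 0 := Function.ne_iff.mp (pathIncidence_mul_eq_zero_iff.not.mpr hX)
  have hsum : ∑ e, Y e = 0 := by
    have hrows : ∑ e, Y e = 1 ᵥ* Y := by
      ext i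
      simp only [vecMul, dotProduct, Pi.one_apply, one_mul]
      exact Finset.sum_apply i _ _
    rw [hrows, hY, ← vecMul_vecMul, one_vecMul_pathIncidence, zero_vecMul]
  obtain ⟨e', -, he'e, he'⟩ := Finset.exists_ne_ne_zero_of_sum_eq_zero hsum (Finset.mem_univ e) he
  have hform : vec (X.map Int.cast) ⬝ᵥ (Z ⊗ₖ ((2⁻¹ : ℝ) • (CartanMatrix.A t).map Int.cast)) *ᵥ
      vec (X.map Int.cast) = 2⁻¹ * ∑ e, (Int.cast ∘ Y e) ⬝ᵥ Z *ᵥ (Int.cast ∘ Y e : n → ℝ) := by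
    rw [kronecker_smul, smul_mulVec, dotProduct_smul, smul_eq_mul,
      ← pathIncidence_transpose_mul_self]
    simp only [← Int.coe_castRingHom, Matrix.map_mul, transpose_map,
      vec_dotProduct_kronecker_transpose_mul_self_mulVec_vec]
    rw [← Matrix.map_mul]
    rfl
  rw [hform]
  have htwo := Finset.add_le_sum (fun e _ => hq_nonneg e) (Finset.mem_univ e) (Finset.mem_univ e')
    he'e.symm
  linarith [hZ _ he, hZ _ he']

theorem two_inv_smul_map_cartanMatrixA (t : ℕ) :
    (2⁻¹ : ℝ) • (CartanMatrix.A t).map (Int.cast : ℤ → ℝ) =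
      of fun (i j : Fin t) => if i = j then 1 else
        if (i : ℕ) + 1 = (j : ℕ) ∨ (j : ℕ) + 1 = (i : ℕ) then -(1 / 2) else 0 := by
  ext i j
  simp only [CartanMatrix.A, Matrix.smul_apply, map_apply, of_apply]
  split_ifs <;> norm_num

theorem kronecker_row_count_bound_general (l t k : ℕ)
    (Q : Matrix (Fin k) (Fin l × Fin t) ℤ) (hQrows : ∀ i, Q i ≠ 0)
    (Z₁ : Matrix (Fin l) (Fin l) ℝ) (h1pd : Z₁.PosDef)
    (h1diag : ∀ i, ∃ z : ℤ, Z₁ i i = z)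
    (h1off : ∀ i j, ∃ z : ℤ, 2 * Z₁ i j = z)
    (Z₂ : Matrix (Fin t) (Fin t) ℝ)
    (hZ₂ : Z₂ = Matrix.of fun (i j : Fin t) => if i = j then 1 else
      if (i : ℕ) + 1 = (j : ℕ) ∨ (j : ℕ) + 1 = (i : ℕ) then -(1 / 2) else 0) :
    (k : ℝ) ≤ ∑ r : Fin l × Fin t, ∑ s : Fin l × Fin t,
      (Z₁ ⊗ₖ Z₂) r s * (((Qᵀ * Q) r s : ℤ) : ℝ) := by
  rw [← two_inv_smul_map_cartanMatrixA] at hZ₂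
  have hrow (i : Fin k) :
      1 ≤ (Int.cast ∘ Q i) ⬝ᵥ (Z₁ ⊗ₖ Z₂) *ᵥ (Int.cast ∘ Q i : Fin l × Fin t → ℝ) := by
    obtain ⟨X, hX⟩ := vec_bijective.surjective (Q i)
    rw [← hX, hZ₂]
    refine one_le_vec_dotProduct_kronecker_cartanMatrixA_mulVec_vec
      (fun v hv => h1pd.one_le_dotProduct_mulVec_intCast h1diag h1off hv) ?_
    rintro rfl
    exact hQrows i (by rw [← hX, vec_zero])
  calc (k : ℝ) = ∑ _i : Fin k, 1 := by simp
    _ ≤ ∑ i, (Q.map Int.cast) i ⬝ᵥ (Z₁ ⊗ₖ Z₂) *ᵥ (Q.map Int.cast) i :=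
      Finset.sum_le_sum fun i _ => hrow i
    _ = _ := by
      rw [← sum_mul_transpose_mul_self_apply]
      push_cast [mul_apply]
      rfl

/-- Let `M = C ⊗ T` be a Kronecker product of symmetric positive semidefinite integer
matrices, and let `Q ∈ ℤ^{k×(lt)}` have no zero rows with `QᵀQ = M`. If `q` is a
positive definite integral quadratic form of rank `l` with Gram matrix `Z₁` and `q_A`
the `A_t` Dynkin form with Gram matrix `Z₂`, then `k ≤ Σ_{r,s} (Z₁ ⊗ Z₂)_{rs} M_{rs}`. -/
theorem kronecker_row_count_bound (l t k : ℕ)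
    (C : Matrix (Fin l) (Fin l) ℤ) (T : Matrix (Fin t) (Fin t) ℤ)
    (hCsym : C.IsSymm) (hTsym : T.IsSymm)
    (hCpsd : (C.map (fun z => (z : ℝ))).PosSemidef)
    (hTpsd : (T.map (fun z => (z : ℝ))).PosSemidef)
    (Q : Matrix (Fin k) (Fin l × Fin t) ℤ) (hQrows : ∀ i, Q i ≠ 0)
    (hQM : Qᵀ * Q = C ⊗ₖ T)
    (Z₁ : Matrix (Fin l) (Fin l) ℝ) (h1sym : Z₁.IsSymm) (h1pd : Z₁.PosDef)
    (h1diag : ∀ i, ∃ z : ℤ, Z₁ i i = z)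
    (h1off : ∀ i j, ∃ z : ℤ, 2 * Z₁ i j = z)
    (Z₂ : Matrix (Fin t) (Fin t) ℝ)
    (hZ₂ : Z₂ = Matrix.of fun (i j : Fin t) => if i = j then 1 else
      if (i : ℕ) + 1 = (j : ℕ) ∨ (j : ℕ) + 1 = (i : ℕ) then -(1 / 2) else 0) :
    (k : ℝ) ≤ ∑ r : Fin l × Fin t, ∑ s : Fin l × Fin t,
      (Z₁ ⊗ₖ Z₂) r s * (((Qᵀ * Q) r s : ℤ) : ℝ) :=
  kronecker_row_count_bound_general l t k Q hQrows Z₁ h1pd h1diag h1off Z₂ hZ₂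
end

section
/- Let p be an odd prime, l_1, l_2 divisors of p − 1, and d a common divisor of l_1 and l_2. Then the inequality ((p^{n_1} − 1)/l_1 + l_1)·p^{n_2} ≥ (p^{n_1} − 1)(p^{n_2} − 1)/(l_1 l_2) + l_1 (p^{n_2} − 1)/l_2 + l_2 (p^{n_1} − 1)/l_1 + l_1 l_2 / d^2 holds for all n_1, n_2 ≥ 1; in particular the bound in Theorem (2rank) implies Brauer's k(B)-conjecture k(B) ≤ p^{n_1 + n_2} for these blocks. -/
set_option maxHeartbeats 1000000


/-- The bound of the rank-2 theorem implies Brauer's `k(B)`-conjecture: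
for an odd prime `p`, `l₁, l₂ ∣ p − 1`, `d ∣ (l₁, l₂)` and `n₁, n₂ ≥ 1`,
`(p^{n₁}−1)(p^{n₂}−1)/(l₁l₂) + l₁(p^{n₂}−1)/l₂ + l₂(p^{n₁}−1)/l₁ + l₁l₂/d² ≤
((p^{n₁}−1)/l₁ + l₁)·p^{n₂} ≤ p^{n₁+n₂}`. -/
theorem rank_two_bound_implies_kB (p l₁ l₂ d n₁ n₂ : ℕ) (hp : p.Prime) (hodd : Odd p)
    (h1 : l₁ ∣ p - 1) (h2 : l₂ ∣ p - 1) (hd1 : d ∣ l₁) (hd2 : d ∣ l₂)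
    (hn₁ : 1 ≤ n₁) (hn₂ : 1 ≤ n₂) :
    ((p : ℚ) ^ n₁ - 1) * ((p : ℚ) ^ n₂ - 1) / ((l₁ : ℚ) * l₂)
        + (l₁ : ℚ) * ((p : ℚ) ^ n₂ - 1) / l₂
        + (l₂ : ℚ) * ((p : ℚ) ^ n₁ - 1) / l₁
        + (l₁ : ℚ) * l₂ / (d : ℚ) ^ 2
      ≤ (((p : ℚ) ^ n₁ - 1) / l₁ + l₁) * (p : ℚ) ^ n₂ ∧
    (((p : ℚ) ^ n₁ - 1) / l₁ + l₁) * (p : ℚ) ^ n₂ ≤ (p : ℚ) ^ (n₁ + n₂) := by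
  have hp2 : 2 ≤ p := hp.two_le
  have hp3 : 3 ≤ p := by
    rcases hodd with ⟨k, hk⟩; omega
  have hl1pos : 0 < l₁ := Nat.pos_of_dvd_of_pos h1 (by omega)
  have hl2pos : 0 < l₂ := Nat.pos_of_dvd_of_pos h2 (by omega)
  have hdpos : 0 < d := Nat.pos_of_dvd_of_pos hd1 hl1pos
  have hl1le : l₁ ≤ p - 1 := Nat.le_of_dvd (by omega) h1
  have hl2le : l₂ ≤ p - 1 := Nat.le_of_dvd (by omega) h2
  -- cast facts to ℚ
  have hL1 : (1 : ℚ) ≤ (l₁ : ℚ) := by exact_mod_cast hl1pos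
  have hL2 : (1 : ℚ) ≤ (l₂ : ℚ) := by exact_mod_cast hl2pos
  have hD : (1 : ℚ) ≤ (d : ℚ) := by exact_mod_cast hdpos
  have hpQ : (3 : ℚ) ≤ (p : ℚ) := by exact_mod_cast hp3
  have hl1Q : (l₁ : ℚ) ≤ (p : ℚ) - 1 := by
    have : (l₁ : ℚ) ≤ ((p - 1 : ℕ) : ℚ) := by exact_mod_cast hl1le
    have hcast : ((p - 1 : ℕ) : ℚ) = (p : ℚ) - 1 := by
      have : 1 ≤ p := by omega
      push_cast [this]; ring
    linarith [this, hcast.le, hcast.ge]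
  have hl2Q : (l₂ : ℚ) ≤ (p : ℚ) - 1 := by
    have : (l₂ : ℚ) ≤ ((p - 1 : ℕ) : ℚ) := by exact_mod_cast hl2le
    have hcast : ((p - 1 : ℕ) : ℚ) = (p : ℚ) - 1 := by
      have : 1 ≤ p := by omega
      push_cast [this]; ring
    linarith [this, hcast.le, hcast.ge]
  have hpn1 : (p : ℚ) ≤ (p : ℚ) ^ n₁ := by
    calc (p : ℚ) = (p : ℚ) ^ 1 := (pow_one _).symm
    _ ≤ (p : ℚ) ^ n₁ := pow_le_pow_right₀ (by linarith) hn₁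
  have hpn2 : (p : ℚ) ≤ (p : ℚ) ^ n₂ := by
    calc (p : ℚ) = (p : ℚ) ^ 1 := (pow_one _).symm
    _ ≤ (p : ℚ) ^ n₂ := pow_le_pow_right₀ (by linarith) hn₂
  set a : ℚ := (p : ℚ) ^ n₁ with ha
  set b : ℚ := (p : ℚ) ^ n₂ with hb
  clear_value a b
  have ha1 : (l₁ : ℚ) ≤ a - 1 := by linarith
  have ha2 : (l₂ : ℚ) ≤ a - 1 := by linarith
  have hb1 : (l₁ : ℚ) ≤ b - 1 := by linarith
  have hb2 : (l₂ : ℚ) ≤ b - 1 := by linarith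
  have hL1' : (0 : ℚ) < (l₁ : ℚ) := by linarith
  have hL2' : (0 : ℚ) < (l₂ : ℚ) := by linarith
  have hD' : (0 : ℚ) < (d : ℚ) := by linarith
  have hDl1 : (d : ℚ) ≤ (l₁ : ℚ) := by exact_mod_cast Nat.le_of_dvd hl1pos hd1
  have hDl2 : (d : ℚ) ≤ (l₂ : ℚ) := by exact_mod_cast Nat.le_of_dvd hl2pos hd2
  constructor
  · rw [← sub_nonneg]
    have key : (((a - 1) / l₁ + l₁) * b)
        - ((a - 1) * (b - 1) / ((l₁ : ℚ) * l₂) + (l₁ : ℚ) * (b - 1) / l₂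
          + (l₂ : ℚ) * (a - 1) / l₁ + (l₁ : ℚ) * l₂ / (d : ℚ) ^ 2)
        = ((((a - 1) * b * l₂ * (d:ℚ)^2 + (l₁:ℚ)^2 * b * l₂ * (d:ℚ)^2)
            - ((a-1)*(b-1)*(d:ℚ)^2 + (l₁:ℚ)^2*(b-1)*(d:ℚ)^2
              + (l₂:ℚ)^2*(a-1)*(d:ℚ)^2 + (l₁:ℚ)^2*(l₂:ℚ)^2))
          / ((l₁ : ℚ) * l₂ * (d : ℚ)^2)) := by
      field_simp
    rw [key]
    apply div_nonneg
    · have hA0 : (0:ℚ) ≤ a - 1 := by linarith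
      have hB2 : (0:ℚ) ≤ (b - 1) - (l₂:ℚ) := by linarith
      have hL2m : (0:ℚ) ≤ (l₂:ℚ) - 1 := by linarith
      have hd21 : (0:ℚ) ≤ (d:ℚ)^2 - 1 := by nlinarith [mul_le_mul_of_nonneg_left hD (by linarith : (0:ℚ) ≤ (d:ℚ))]
      have t1 : (0:ℚ) ≤ (d:ℚ)^2 * ((l₂:ℚ) - 1) * (a - 1) * ((b - 1) - (l₂:ℚ)) :=
        mul_nonneg (mul_nonneg (mul_nonneg (sq_nonneg _) hL2m) hA0) hB2
      have t2 : (0:ℚ) ≤ (l₁:ℚ)^2 * (((d:ℚ)^2 - 1) * ((b - 1) * ((l₂:ℚ) - 1) + (l₂:ℚ))) :=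
        mul_nonneg (sq_nonneg _) (mul_nonneg hd21 (by nlinarith [mul_nonneg (sub_nonneg.2 hb2) hL2m]))
      have t3 : (0:ℚ) ≤ (l₁:ℚ)^2 * (((b - 1) - (l₂:ℚ)) * ((l₂:ℚ) - 1)) :=
        mul_nonneg (sq_nonneg _) (mul_nonneg hB2 hL2m)
      linarith [t1, t2, t3]
    · positivity
  · rw [pow_add, ← ha, ← hb]
    have hbpos : (0 : ℚ) < b := by linarith
    have : (a - 1) / l₁ + (l₁ : ℚ) ≤ a := by
      rw [div_add' _ _ _ (ne_of_gt hL1'), div_le_iff₀ hL1']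
      nlinarith [mul_nonneg (sub_nonneg.2 hL1) (sub_nonneg.2 ha1)]
    have hbpos' : (0:ℚ) ≤ b := le_of_lt hbpos
    calc ((a - 1) / l₁ + (l₁:ℚ)) * b ≤ a * b := mul_le_mul_of_nonneg_right this hbpos'
    _ = a * b := rfl
end

section
/- Let c11, c22, c12 be the entries of a symmetric positive definite 2×2 integer matrix C. Define U ∈ ℤ^{(c11 + c22 − c12)×2} with rows: (1,0) repeated c11 − c12 times, (1,1) repeated c12 times, and (0,1) repeated c22 − c12 times (assuming c12 ≤ min(c11, c22), c12 ≥ 0). Then U^T U = C. Moreover, for any S ∈ GL(2,ℤ) with S^T C S = (c'_{ij}), one has c11 + c22 − c12 ≤ c'_{11} + c'_{22} − c'_{12}, i.e., the quantity c11 + c22 − c12 is minimal among all basic-set transforms when U exists. -/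
/-!
Write `C' = SᵀCS`. Since `UᵀU = C`, we get `C' = VᵀV` for `V = US`, so
`c'₁₁ + c'₂₂ - c'₁₂ = ∑ᵢ q(Vᵢ)`, a sum over the rows of `V` of the `A₂` form
`q(x, y) = x² - xy + y²`. As `S` is invertible and no row of `U` vanishes, no row of `V`
vanishes, and `q ≥ 1` on nonzero integer vectors; so the sum is at least the number of rows
of `U`, which is `c₁₁ + c₂₂ - c₁₂`.
-/

open Matrix

def a2Form (v : Fin 2 → ℤ) : ℤ := v 0 * v 0 + v 1 * v 1 - v 0 * v 1

theorem one_le_a2Form {v : Fin 2 → ℤ} (hv : v ≠ 0) : 1 ≤ a2Form v := by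
  have hv' : v 0 ≠ 0 ∨ v 1 ≠ 0 := by
    by_contra! h
    exact hv (funext fun i => by fin_cases i <;> simp [h])
  unfold a2Form
  -- `4 q(x, y) = (x - 2y)² + 3x² = (2x - y)² + 3y²`
  rcases hv' with h | h
  · have := mul_self_pos.2 h
    nlinarith [sq_nonneg (v 0 - 2 * v 1)]
  · have := mul_self_pos.2 h
    nlinarith [sq_nonneg (2 * v 0 - v 1)]

theorem mul_row_ne_zero {m n R : Type*} [Fintype n] [DecidableEq n] [CommRing R]
    {U : Matrix m n R} {S : Matrix n n R} (hS : IsUnit S.det) (hU : ∀ i, U i ≠ 0) (i : m) :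
    (U * S) i ≠ 0 := by
  rw [mul_apply_eq_vecMul, ← zero_vecMul S]
  exact (vecMul_injective_of_isUnit ((isUnit_iff_isUnit_det S).2 hS)).ne (hU i)

section Gram

variable {n : ℕ}

theorem transpose_mul_self_a2_eq_sum (V : Matrix (Fin n) (Fin 2) ℤ) :
    (Vᵀ * V) 0 0 + (Vᵀ * V) 1 1 - (Vᵀ * V) 0 1 = ∑ i, a2Form (V i) := by
  simp only [mul_apply, transpose_apply, a2Form, ← Finset.sum_add_distrib,
    ← Finset.sum_sub_distrib]

theorem card_le_transpose_mul_self_a2 (V : Matrix (Fin n) (Fin 2) ℤ) (hV : ∀ i, V i ≠ 0) :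
    (n : ℤ) ≤ (Vᵀ * V) 0 0 + (Vᵀ * V) 1 1 - (Vᵀ * V) 0 1 :=
  calc (n : ℤ) = ∑ _i : Fin n, 1 := by simp
    _ ≤ ∑ i, a2Form (V i) := Finset.sum_le_sum fun i _ => one_le_a2Form (hV i)
    _ = _ := (transpose_mul_self_a2_eq_sum V).symm

theorem card_le_congr_a2 (U : Matrix (Fin n) (Fin 2) ℤ) (hU : ∀ i, U i ≠ 0)
    {S : Matrix (Fin 2) (Fin 2) ℤ} (hS : IsUnit S.det) :
    (n : ℤ) ≤ (Sᵀ * (Uᵀ * U) * S) 0 0 + (Sᵀ * (Uᵀ * U) * S) 1 1 - (Sᵀ * (Uᵀ * U) * S) 0 1 := by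
  have hcongr : Sᵀ * (Uᵀ * U) * S = (U * S)ᵀ * (U * S) := by
    simp only [transpose_mul, Matrix.mul_assoc]
  rw [hcongr]
  exact card_le_transpose_mul_self_a2 _ (mul_row_ne_zero hS hU)

end Gram

theorem sum_fin_ite_mem_Ico {R : Type*} [AddCommMonoidWithOne R] {n a b : ℕ} (hb : b ≤ n) :
    ∑ i : Fin n, (if a ≤ (i : ℕ) ∧ (i : ℕ) < b then (1 : R) else 0) = ((b - a : ℕ) : R) := by
  rw [Fin.sum_univ_eq_sum_range (fun i => if a ≤ i ∧ i < b then (1 : R) else 0),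
    Finset.sum_boole, ← Nat.card_Ico]
  congr 2
  ext i
  simp only [Finset.mem_filter, Finset.mem_range, Finset.mem_Ico]
  omega

theorem ite_mem_Ico_mul_ite_mem_Ico {R : Type*} [MulZeroOneClass R] {x a b c d : ℕ} :
    ((if a ≤ x ∧ x < b then 1 else 0) * (if c ≤ x ∧ x < d then 1 else 0) : R) =
      if max a c ≤ x ∧ x < min b d then 1 else 0 := by
  simp only [ite_zero_mul_ite_zero, one_mul, max_le_iff, lt_min_iff, and_and_and_comm]

section BasicSet

variable {c11 c22 c12 : ℕ}

def basicSet (c11 c22 c12 : ℕ) : Matrix (Fin (c11 + c22 - c12)) (Fin 2) ℤ :=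
  of fun i j =>
    if (i : ℕ) < c11 - c12 then (if j = 0 then 1 else 0)
    else if (i : ℕ) < c11 then 1
    else (if j = 0 then 0 else 1)

theorem basicSet_row_ne_zero (i : Fin (c11 + c22 - c12)) : basicSet c11 c22 c12 i ≠ 0 := by
  intro h
  have hcol0 := congrFun h 0
  have hcol1 := congrFun h 1
  simp [basicSet] at hcol0 hcol1
  split_ifs at hcol0 <;> omega

theorem basicSet_apply (h1 : c12 ≤ c11) (i : Fin (c11 + c22 - c12)) (j : Fin 2) :
    basicSet c11 c22 c12 i j =
      if ![0, c11 - c12] j ≤ (i : ℕ) ∧ (i : ℕ) < ![c11, c11 + c22 - c12] j then 1 else 0 := by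
  have := i.isLt
  fin_cases j <;> simp only [basicSet, of_apply] <;> split_ifs <;> simp_all <;> omega

theorem basicSet_transpose_mul_self (h1 : c12 ≤ c11) (h2 : c12 ≤ c22) :
    (basicSet c11 c22 c12)ᵀ * basicSet c11 c22 c12 = !![(c11 : ℤ), c12; c12, c22] := by
  ext j k
  simp only [mul_apply, transpose_apply, basicSet_apply h1, ite_mem_Ico_mul_ite_mem_Ico]
  rw [sum_fin_ite_mem_Ico (min_le_of_right_le (by fin_cases k <;> simp; omega))]
  fin_cases j <;> fin_cases k <;> simp <;> omega

end BasicSet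

theorem two_by_two_minimality_general (c11 c22 c12 : ℕ) (h1 : c12 ≤ c11) (h2 : c12 ≤ c22)
    (C : Matrix (Fin 2) (Fin 2) ℤ)
    (hC : C = !![(c11 : ℤ), (c12 : ℤ); (c12 : ℤ), (c22 : ℤ)])
    (U : Matrix (Fin (c11 + c22 - c12)) (Fin 2) ℤ)
    (hU : U = Matrix.of fun (i : Fin (c11 + c22 - c12)) (j : Fin 2) =>
      if (i : ℕ) < c11 - c12 then (if j = 0 then 1 else 0)
      else if (i : ℕ) < c11 then 1
      else (if j = 0 then 0 else 1)) :
    Uᵀ * U = C ∧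
    ∀ S : Matrix (Fin 2) (Fin 2) ℤ, IsUnit S.det →
      ((c11 : ℤ) + c22 - c12) ≤
        (Sᵀ * C * S) 0 0 + (Sᵀ * C * S) 1 1 - (Sᵀ * C * S) 0 1 := by
  obtain rfl : U = basicSet c11 c22 c12 := hU
  have hGram := basicSet_transpose_mul_self h1 h2
  rw [← hC] at hGram
  refine ⟨hGram, fun S hS => ?_⟩
  have hcard := card_le_congr_a2 (basicSet c11 c22 c12) basicSet_row_ne_zero hS
  rw [hGram] at hcard
  have hrows : ((c11 + c22 - c12 : ℕ) : ℤ) = c11 + c22 - c12 := by omega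
  rwa [hrows] at hcard

/-- For a symmetric positive definite matrix `C = ((c11, c12),(c12, c22))` with
`0 ≤ c12 ≤ min(c11, c22)`, the matrix `U` with rows `(1,0)` (`c11 − c12` times),
`(1,1)` (`c12` times) and `(0,1)` (`c22 − c12` times) satisfies `UᵀU = C`; moreover
for any `S ∈ GL(2,ℤ)` with `SᵀCS = C'`, one has `c11 + c22 − c12 ≤ c'11 + c'22 − c'12`. -/
theorem two_by_two_minimality (c11 c22 c12 : ℕ) (h1 : c12 ≤ c11) (h2 : c12 ≤ c22)
    (C : Matrix (Fin 2) (Fin 2) ℤ)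
    (hC : C = !![(c11 : ℤ), (c12 : ℤ); (c12 : ℤ), (c22 : ℤ)])
    (hpd : (C.map (fun z => (z : ℝ))).PosDef)
    (U : Matrix (Fin (c11 + c22 - c12)) (Fin 2) ℤ)
    (hU : U = Matrix.of fun (i : Fin (c11 + c22 - c12)) (j : Fin 2) =>
      if (i : ℕ) < c11 - c12 then (if j = 0 then 1 else 0)
      else if (i : ℕ) < c11 then 1
      else (if j = 0 then 0 else 1)) :
    Uᵀ * U = C ∧
    ∀ S : Matrix (Fin 2) (Fin 2) ℤ, IsUnit S.det →
      ((c11 : ℤ) + c22 - c12) ≤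
        (Sᵀ * C * S) 0 0 + (Sᵀ * C * S) 1 1 - (Sᵀ * C * S) 0 1 :=
  two_by_two_minimality_general c11 c22 c12 h1 h2 C hC U hU
end
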